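/- The hyperplanes H_1,…,H_N associated to pairwise distinct μ_1,…,μ_N ∈ ℂ are in general position: for any indices 1 ≤ j_1 < ⋯ < j_k ≤ N with k ≤ n, the intersection H_{j_1} ∩ ⋯ ∩ H_{j_k} equals {π_n(μ_{j_1},…,μ_{j_k},λ_1,…,λ_{n-k}) : λ ∈ ℂ^{n-k}} and is an (n−k)-dimensional affine subspace. -/

import Mathlib

/-- The symmetrization map `π_n : ℂ^n → ℂ^n`, whose `j`-th coordinate is the
`(j+1)`-st elementary symmetric polynomial of the entries. -/
noncomputable def symPoly (n : ℕ) (lam : Fin n → ℂ) : Fin n → ℂ :=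
  fun j => ∑ t ∈ Finset.powersetCard ((j : ℕ) + 1) Finset.univ, ∏ i ∈ t, lam i

/-- The `n`-fold symmetric product `S_n(D) = π_n(D^n)` of a planar set `D`. -/
noncomputable def symProd (n : ℕ) (D : Set ℂ) : Set (Fin n → ℂ) :=
  symPoly n '' {lam | ∀ i, lam i ∈ D}


/-- The affine hyperplane `H(μ) = {(μ + z₁, μ z₁ + z₂, …, μ z_{n-2} + z_{n-1}, μ z_{n-1})}`
associated to `μ ∈ ℂ`, encoded via an auxiliary tuple `z : Fin (n+1) → ℂ`
with `z 0 = 1` and `z n = 0`. -/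
def hplane (n : ℕ) (μ : ℂ) : Set (Fin n → ℂ) :=
  {v | ∃ z : Fin (n + 1) → ℂ, z 0 = 1 ∧ z (Fin.last n) = 0 ∧
    ∀ j : Fin n, v j = μ * z j.castSucc + z j.succ}

/-! Encode `v ∈ ℂⁿ` by the monic polynomial `P_v = Xⁿ + v₀ Xⁿ⁻¹ + ⋯ + v_{n-1}`; under this
encoding `π_n(λ)` is `∏ (X + λᵢ)` (Vieta). The tuple `z` in the definition of `H(μ)` is Horner's
scheme for evaluating `P_v` at `-μ`, so `H(μ) = {v | (X + μ) ∣ P_v}`, and for distinct `μ_j` the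
intersection is `{v | M ∣ P_v}` with `M = ∏ (X + μ_j)`. These are the coefficient vectors of `M * Q`
with `Q` monic of degree `n - k`: the image of `ℂⁿ⁻ᵏ` under an affine map whose linear part
`w ↦ M * w` is injective, and over `ℂ` every such `Q` factors as `∏ (X + λᵢ)`. -/

open Polynomial

section LowerCoeffs

variable {R : Type*} [CommRing R]

noncomputable def lowerCoeffs (n : ℕ) : R[X] →ₗ[R] Fin n → R :=
  LinearMap.pi fun j => lcoeff R (n - 1 - j)

noncomputable def lowerPoly (n : ℕ) : (Fin n → R) →ₗ[R] R[X] :=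
  ∑ j : Fin n, (monomial (n - 1 - j)).comp (LinearMap.proj j)

noncomputable def monicOfLowerCoeffs (n : ℕ) (v : Fin n → R) : R[X] :=
  X ^ n + lowerPoly n v

lemma lowerCoeffs_apply (n : ℕ) (p : R[X]) (j : Fin n) :
    lowerCoeffs n p j = p.coeff (n - 1 - j) := rfl

lemma lowerPoly_apply (n : ℕ) (v : Fin n → R) :
    lowerPoly n v = ∑ j : Fin n, monomial (n - 1 - j) (v j) := by
  simp [lowerPoly]

lemma degree_lowerPoly_lt (n : ℕ) (v : Fin n → R) : (lowerPoly n v).degree < n := by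
  rw [lowerPoly_apply]
  refine (degree_sum_le _ _).trans_lt ((Finset.sup_lt_iff (WithBot.bot_lt_coe n)).2 ?_)
  intro j _
  exact (degree_monomial_le _ _).trans_lt (Nat.cast_lt.2 (by omega))

lemma lowerCoeffs_lowerPoly (n : ℕ) (v : Fin n → R) : lowerCoeffs n (lowerPoly n v) = v := by
  funext j
  rw [lowerCoeffs_apply, lowerPoly_apply, finsetSum_coeff, Finset.sum_eq_single j]
  · simp
  · intro i _ hij
    rw [coeff_monomial, if_neg]
    have := Fin.val_ne_of_ne hij
    omega
  · simp

lemma lowerCoeffs_X_pow (n : ℕ) : lowerCoeffs n (X ^ n : R[X]) = 0 := by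
  funext j
  rw [lowerCoeffs_apply, coeff_X_pow, if_neg (by omega), Pi.zero_apply]

lemma lowerCoeffs_monicOfLowerCoeffs (n : ℕ) (v : Fin n → R) :
    lowerCoeffs n (monicOfLowerCoeffs n v) = v := by
  rw [monicOfLowerCoeffs, map_add, lowerCoeffs_X_pow, lowerCoeffs_lowerPoly, zero_add]

lemma eq_zero_of_lowerCoeffs_eq_zero {n : ℕ} {p : R[X]} (hp : p.degree < n)
    (h : lowerCoeffs n p = 0) : p = 0 := by
  ext d
  rw [coeff_zero]
  by_cases hd : d < n
  · simpa [lowerCoeffs_apply, show n - 1 - (n - 1 - d) = d by omega] using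
      congrFun h ⟨n - 1 - d, by omega⟩
  · exact coeff_eq_zero_of_degree_lt (hp.trans_le (by exact_mod_cast not_lt.1 hd))

@[simp]
lemma monicOfLowerCoeffs_zero (v : Fin 0 → R) : monicOfLowerCoeffs 0 v = 1 := by
  simp [monicOfLowerCoeffs, lowerPoly_apply]

lemma monicOfLowerCoeffs_succ (n : ℕ) (v : Fin (n + 1) → R) :
    monicOfLowerCoeffs (n + 1) v =
      X * monicOfLowerCoeffs n (Fin.init v) + C (v (Fin.last n)) := by
  simp only [monicOfLowerCoeffs, lowerPoly_apply, Fin.sum_univ_castSucc, mul_add, Finset.mul_sum,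
    X_mul_monomial, pow_succ', Fin.val_castSucc, Fin.val_last, Nat.add_sub_cancel, Nat.sub_self]
  rw [monomial_zero_left, add_assoc]
  congr 3 with j
  rw [show n - 1 - j + 1 = n - j by omega]
  rfl

lemma eval_monicOfLowerCoeffs_of_recurrence {n : ℕ} {μ : R}
    {v : Fin n → R} {z : Fin (n + 1) → R} (h0 : z 0 = 1)
    (hrec : ∀ j : Fin n, v j = μ * z j.castSucc + z j.succ) :
    z (Fin.last n) = (monicOfLowerCoeffs n v).eval (-μ) := by
  induction n with
  | zero => simpa using h0
  | succ n ih =>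
    have hinit : z (Fin.last n).castSucc = (monicOfLowerCoeffs n (Fin.init v)).eval (-μ) :=
      ih (z := Fin.init z) h0 fun j => by
        simpa only [Fin.init, Fin.succ_castSucc] using hrec j.castSucc
    rw [monicOfLowerCoeffs_succ, eval_add, eval_mul, eval_X, eval_C, ← hinit, hrec, Fin.succ_last]
    ring

lemma monic_monicOfLowerCoeffs (n : ℕ) (v : Fin n → R) : (monicOfLowerCoeffs n v).Monic :=
  monic_X_pow_add (degree_lowerPoly_lt n v)

variable [Nontrivial R]

lemma natDegree_monicOfLowerCoeffs (n : ℕ) (v : Fin n → R) :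
    (monicOfLowerCoeffs n v).natDegree = n := by
  rw [monicOfLowerCoeffs, natDegree_add_eq_left_of_degree_lt, natDegree_X_pow]
  simpa using degree_lowerPoly_lt n v

lemma monicOfLowerCoeffs_lowerCoeffs {n : ℕ} {p : R[X]} (hp : p.Monic) (hn : p.natDegree = n) :
    monicOfLowerCoeffs n (lowerCoeffs n p) = p := by
  subst hn
  set q := monicOfLowerCoeffs p.natDegree (lowerCoeffs p.natDegree p)
  have hq : q.Monic := monic_monicOfLowerCoeffs _ _
  have hdeg : p.degree = q.degree := by
    rw [degree_eq_natDegree hq.ne_zero, natDegree_monicOfLowerCoeffs,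
      degree_eq_natDegree hp.ne_zero]
  refine (sub_eq_zero.1 (eq_zero_of_lowerCoeffs_eq_zero (n := p.natDegree) ?_ ?_)).symm
  · rw [← degree_eq_natDegree hp.ne_zero]
    exact degree_sub_lt_left hdeg hp.ne_zero (by rw [hp.leadingCoeff, hq.leadingCoeff])
  · rw [map_sub, lowerCoeffs_monicOfLowerCoeffs, sub_self]

lemma lowerCoeffs_mul_lowerPoly_injective {n k : ℕ} {M : R[X]} (hM : M.Monic)
    (hMdeg : M.natDegree = k) (hkn : k ≤ n) :
    Function.Injective (lowerCoeffs n ∘ₗ LinearMap.mulLeft R M ∘ₗ lowerPoly (n - k)) := by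
  rw [injective_iff_map_eq_zero]
  intro w hw
  have hdeg : (M * lowerPoly (n - k) w).degree < n :=
    calc (M * lowerPoly (n - k) w).degree ≤ M.degree + (lowerPoly (n - k) w).degree :=
          degree_mul_le _ _
      _ < k + ((n - k : ℕ) : WithBot ℕ) := by
          rw [degree_eq_natDegree hM.ne_zero, hMdeg]
          exact WithBot.add_lt_add_left WithBot.coe_ne_bot (degree_lowerPoly_lt _ w)
      _ = n := by norm_cast; omega
  have hq : lowerPoly (n - k) w = 0 :=
    hM.mul_right_eq_zero_iff.1 (eq_zero_of_lowerCoeffs_eq_zero hdeg hw)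
  rw [← lowerCoeffs_lowerPoly (n - k) w, hq, map_zero]

lemma dvd_monicOfLowerCoeffs_iff {n k : ℕ} {M : R[X]} (hM : M.Monic) (hMdeg : M.natDegree = k)
    (hkn : k ≤ n) {v : Fin n → R} :
    M ∣ monicOfLowerCoeffs n v ↔
      ∃ w : Fin (n - k) → R, lowerCoeffs n (M * monicOfLowerCoeffs (n - k) w) = v := by
  constructor
  · rintro ⟨Q, hQ⟩
    have hQmonic : Q.Monic := hM.of_mul_monic_left (hQ ▸ monic_monicOfLowerCoeffs n v)
    have hQdeg : Q.natDegree = n - k := by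
      have := congrArg natDegree hQ
      rw [natDegree_monicOfLowerCoeffs, hM.natDegree_mul hQmonic, hMdeg] at this
      omega
    refine ⟨lowerCoeffs (n - k) Q, ?_⟩
    rw [monicOfLowerCoeffs_lowerCoeffs hQmonic hQdeg, ← hQ, lowerCoeffs_monicOfLowerCoeffs]
  · rintro ⟨w, rfl⟩
    have hw := monic_monicOfLowerCoeffs (n - k) w
    refine ⟨_, monicOfLowerCoeffs_lowerCoeffs (hM.mul hw) ?_⟩
    rw [hM.natDegree_mul hw, hMdeg, natDegree_monicOfLowerCoeffs]
    omega

lemma exists_affineSubspace_coe_eq_setOf_dvd {n k : ℕ} {M : R[X]} (hM : M.Monic)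
    (hMdeg : M.natDegree = k) (hkn : k ≤ n) :
    ∃ p : AffineSubspace R (Fin n → R),
      (p : Set (Fin n → R)) = {v | M ∣ monicOfLowerCoeffs n v} ∧
      Module.finrank R p.direction = n - k := by
  set L := lowerCoeffs n ∘ₗ LinearMap.mulLeft R M ∘ₗ lowerPoly (n - k)
  refine ⟨AffineSubspace.mk' (lowerCoeffs n (M * X ^ (n - k))) (LinearMap.range L), ?_, ?_⟩
  · ext v
    rw [SetLike.mem_coe, AffineSubspace.mem_mk', Set.mem_ofPred_eq,
      dvd_monicOfLowerCoeffs_iff hM hMdeg hkn]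
    simp [L, monicOfLowerCoeffs, mul_add, eq_sub_iff_add_eq, add_comm]
  · rw [AffineSubspace.direction_mk', LinearMap.finrank_range_of_inj
      (lowerCoeffs_mul_lowerPoly_injective hM hMdeg hkn), Module.finrank_fin_fun]

end LowerCoeffs

lemma natDegree_prod_X_add_C {R ι : Type*} [CommRing R] [Nontrivial R] [Fintype ι] (a : ι → R) :
    (∏ i, (X + C (a i))).natDegree = Fintype.card ι := by
  rw [natDegree_prod_of_monic _ _ fun i _ => monic_X_add_C (a i)]
  simp

lemma prod_X_add_C_dvd_iff {K ι : Type*} [Field K] [Fintype ι] {μ : ι → K}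
    (hμ : Function.Injective μ) {p : K[X]} :
    ∏ i, (X + C (μ i)) ∣ p ↔ ∀ i, X + C (μ i) ∣ p := by
  refine ⟨fun h i => (Finset.dvd_prod_of_mem (fun i => X + C (μ i)) (Finset.mem_univ i)).trans h,
    fun h => ?_⟩
  refine Finset.prod_dvd_of_coprime (fun i _ j _ hij => ?_) fun i _ => h i
  have : IsCoprime (X - C (-μ i)) (X - C (-μ j)) :=
    pairwise_coprime_X_sub_C (s := fun i => -μ i) (neg_injective.comp hμ) hij
  simp only [C_neg, sub_neg_eq_add] at this
  exact this

lemma exists_prod_X_add_C_eq {K : Type*} [Field K] [IsAlgClosed K] {n : ℕ} {p : K[X]}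
    (hp : p.Monic) (hn : p.natDegree = n) : ∃ a : Fin n → K, ∏ i, (X + C (a i)) = p := by
  classical
  have hcard : Fintype.card (p.roots : Type _) = n := by
    rw [Multiset.card_coe, IsAlgClosed.card_roots_eq_natDegree, hn]
  set e := Fintype.equivFinOfCardEq hcard
  refine ⟨fun i => -(e.symm i : K), ?_⟩
  conv_rhs => rw [(IsAlgClosed.splits p).eq_prod_roots_of_monic hp, ← Multiset.map_univ,
    ← Finset.prod_eq_multiset_prod, ← e.symm.prod_comp]
  simp [sub_eq_add_neg]

lemma prod_append_cast {α M : Type*} [CommMonoid M] {a b n : ℕ} (h : n = a + b)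
    (u : Fin a → α) (v : Fin b → α) (f : α → M) :
    ∏ i : Fin n, f (Fin.append u v (Fin.cast h i)) = (∏ i, f (u i)) * ∏ i, f (v i) := by
  rw [Fintype.prod_equiv (finCongr h) (fun i => f (Fin.append u v (Fin.cast h i)))
    (fun i => f (Fin.append u v i)) fun i => rfl, Fin.prod_univ_add]
  simp

lemma mem_hplane_iff_dvd (n : ℕ) (μ : ℂ) (v : Fin n → ℂ) :
    v ∈ hplane n μ ↔ X + C μ ∣ monicOfLowerCoeffs n v := by
  rw [← sub_neg_eq_add, ← C_neg, dvd_iff_isRoot, IsRoot.def]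
  constructor
  · rintro ⟨z, h0, hlast, hrec⟩
    rw [← eval_monicOfLowerCoeffs_of_recurrence h0 hrec, hlast]
  · intro hroot
    -- `z i` is the value at `-μ` of the monic polynomial with lower coefficients `v₀, …, v_{i-1}`
    refine ⟨fun i => (monicOfLowerCoeffs i (Fin.take i (Nat.lt_succ_iff.1 i.2) v)).eval (-μ),
      ?_, ?_, fun j => ?_⟩
    · simp
    · simpa using hroot
    · simp only [Fin.val_succ, Fin.val_castSucc, Fin.take_succ_eq_snoc _ j.2, Fin.eta,
        monicOfLowerCoeffs_succ, Fin.init_snoc, Fin.snoc_last, eval_add, eval_mul, eval_X, eval_C]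
      ring

lemma symPoly_eq_lowerCoeffs (n : ℕ) (lam : Fin n → ℂ) :
    symPoly n lam = lowerCoeffs n (∏ i, (X + C (lam i))) := by
  funext j
  rw [lowerCoeffs_apply, Finset.prod_X_add_C_coeff _ _ (by simp; omega), symPoly,
    Finset.card_univ, Fintype.card_fin, show n - (n - 1 - j) = j + 1 by omega]

lemma monicOfLowerCoeffs_symPoly (n : ℕ) (lam : Fin n → ℂ) :
    monicOfLowerCoeffs n (symPoly n lam) = ∏ i, (X + C (lam i)) := by
  rw [symPoly_eq_lowerCoeffs, monicOfLowerCoeffs_lowerCoeffs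
    (monic_prod_of_monic _ _ fun i _ => monic_X_add_C (lam i))]
  rw [natDegree_prod_X_add_C, Fintype.card_fin]

lemma symPoly_surjective (n : ℕ) : Function.Surjective (symPoly n) := fun w => by
  obtain ⟨lam, hlam⟩ := exists_prod_X_add_C_eq (monic_monicOfLowerCoeffs n w)
    (natDegree_monicOfLowerCoeffs n w)
  exact ⟨lam, by rw [symPoly_eq_lowerCoeffs, hlam, lowerCoeffs_monicOfLowerCoeffs]⟩

theorem hplanes_general_position_general (n k : ℕ) (hkn : k ≤ n)
    (μ : Fin k → ℂ) (hμ : Function.Injective μ) :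
    (⋂ j, hplane n (μ j)) =
      {v | ∃ lam : Fin (n - k) → ℂ,
        v = symPoly n (fun i =>
          Fin.append μ lam (Fin.cast (Nat.add_sub_cancel' hkn).symm i))} ∧
    ∃ p : AffineSubspace ℂ (Fin n → ℂ),
      (p : Set (Fin n → ℂ)) = ⋂ j, hplane n (μ j) ∧
      Module.finrank ℂ p.direction = n - k := by
  set M : ℂ[X] := ∏ j, (X + C (μ j))
  have hM : M.Monic := monic_prod_of_monic _ _ fun j _ => monic_X_add_C (μ j)
  have hMdeg : M.natDegree = k := by rw [natDegree_prod_X_add_C, Fintype.card_fin]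
  have hinter : ⋂ j, hplane n (μ j) = {v | M ∣ monicOfLowerCoeffs n v} := by
    ext v
    simp only [Set.mem_iInter, mem_hplane_iff_dvd, Set.mem_ofPred_eq, prod_X_add_C_dvd_iff hμ, M]
  refine ⟨?_, ?_⟩
  · ext v
    rw [hinter, Set.mem_ofPred_eq, Set.mem_ofPred_eq, dvd_monicOfLowerCoeffs_iff hM hMdeg hkn,
      (symPoly_surjective _).exists]
    have happend (lam : Fin (n - k) → ℂ) :
        ∏ i : Fin n, (X + C (Fin.append μ lam (Fin.cast (Nat.add_sub_cancel' hkn).symm i))) =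
          M * ∏ i, (X + C (lam i)) :=
      prod_append_cast _ μ lam fun a => X + C a
    simp_rw [monicOfLowerCoeffs_symPoly, symPoly_eq_lowerCoeffs, happend, eq_comm]
  · obtain ⟨p, hp, hdim⟩ := exists_affineSubspace_coe_eq_setOf_dvd hM hMdeg hkn
    exact ⟨p, hp.trans hinter.symm, hdim⟩

/-- The hyperplanes `H(μ_j)` for pairwise distinct `μ_j` are in general
position: for `k ≤ n` distinct values `μ_1, …, μ_k`, the intersection
`H(μ_1) ∩ ⋯ ∩ H(μ_k)` equals `{π_n(μ_1,…,μ_k,λ) : λ ∈ ℂ^{n-k}}`, an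
`(n-k)`-dimensional affine subspace. -/
theorem hplanes_general_position (n k : ℕ) (hk : 1 ≤ k) (hkn : k ≤ n)
    (hn : 2 ≤ n) (μ : Fin k → ℂ) (hμ : Function.Injective μ) :
    (⋂ j, hplane n (μ j)) =
      {v | ∃ lam : Fin (n - k) → ℂ,
        v = symPoly n (fun i =>
          Fin.append μ lam (Fin.cast (Nat.add_sub_cancel' hkn).symm i))} ∧
    ∃ p : AffineSubspace ℂ (Fin n → ℂ),
      (p : Set (Fin n → ℂ)) = ⋂ j, hplane n (μ j) ∧
      Module.finrank ℂ p.direction = n - k :=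
  hplanes_general_position_general n k hkn μ hμ
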